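/- Let T > 0, α > 0, let W ⊂ ℤ be a finite set, let j : L²(0,T) → ℝ be continuous, let (η_ε)_{ε>0} be a family of positive mollifiers, and let εⁿ → 0 be a sequence of positive numbers. Define ĵ_{εⁿ}(w) := j(K_{εⁿ} w) + α·TV(w) and ĵ(w) := j(w) + α·TV(w) on BV_W(0,T). Then ĵ_{εⁿ} Γ-converges to ĵ as n → ∞ with respect to weak-* convergence in BV_W(0,T): (i) (lower bound) for every w ∈ BV_W(0,T) and every sequence (wⁿ) ⊂ BV_W(0,T) with wⁿ → w in L¹(0,T) and limsup_n TV(wⁿ) < ∞, one has ĵ(w) ≤ liminf_n ĵ_{εⁿ}(wⁿ); (ii) (recovery sequence) for every w ∈ BV_W(0,T), the constant sequence wⁿ := w satisfies ĵ_{εⁿ}(wⁿ) → ĵ(w); since this sequence also converges strictly, Γ-convergence also holds with respect to strict convergence in BV_W(0,T). -/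

import Mathlib

open MeasureTheory Set Filter
open scoped ENNReal

/-- The set of test values defining the total variation of `f` on `(0,T)`:
all numbers `∫₀ᵀ f φ'` for `φ ∈ C¹_c(0,T)` with `|φ| ≤ 1`. -/
def TVset (T : ℝ) (f : ℝ → ℝ) : Set ℝ :=
  {a : ℝ | ∃ φ : ℝ → ℝ, ContDiff ℝ 1 φ ∧ HasCompactSupport φ ∧
    Function.support φ ⊆ Ioo 0 T ∧ (∀ s, |φ s| ≤ 1) ∧
    a = ∫ t in Ioo (0:ℝ) T, f t * deriv φ t}

/-- The total variation `TV(f)` of `f` on `(0,T)`. -/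
noncomputable def TV (T : ℝ) (f : ℝ → ℝ) : ℝ := sSup (TVset T f)

/-- Membership in `BV_W(0,T)`: `f ∈ L¹(0,T)`, `TV(f) < ∞`
(i.e. the defining set is bounded above), and `f(t) ∈ W` a.e. -/
def memBVW (T : ℝ) (W : Finset ℤ) (f : ℝ → ℝ) : Prop :=
  IntegrableOn f (Ioo 0 T) ∧ BddAbove (TVset T f) ∧
  ∀ᵐ t ∂(volume.restrict (Ioo (0:ℝ) T)), ∃ k ∈ W, f t = (k : ℝ)


lemma aux_bdd (f : ℝ → ℝ) (hc : Continuous f) (hs : HasCompactSupport f) :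
    ∃ C, 0 ≤ C ∧ ∀ x, |f x| ≤ C := by
  obtain ⟨x₀, hx₀⟩ := (hc.abs).exists_forall_ge_of_hasCompactSupport (hs.abs)
  exact ⟨|f x₀|, abs_nonneg _, hx₀⟩

lemma aux_hcs {e : ℝ} {f : ℝ → ℝ} (hfsupp : Function.support f ⊆ Icc (-e) e) :
    HasCompactSupport f :=
  HasCompactSupport.intro isCompact_Icc fun x hx => by
    by_contra h; exact hx (hfsupp h)

lemma aux_K_integrableOn {T : ℝ} {f : ℝ → ℝ} (hfc : Continuous f)
    (C : ℝ) (hC : ∀ x, |f x| ≤ C)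
    {v : ℝ → ℝ} (hv : IntegrableOn v (Ioo 0 T)) (t : ℝ) :
    IntegrableOn (fun s => f (t - s) * v s) (Ioo 0 T) := by
  refine Integrable.bdd_mul hv
    ((hfc.comp (continuous_const.sub continuous_id)).aestronglyMeasurable) (c := C) (Eventually.of_forall fun s => ?_)
  simpa [Real.norm_eq_abs] using hC (t - s)

lemma aux_K_cont {T : ℝ} {f : ℝ → ℝ} (hfc : Continuous f)
    (C : ℝ) (hC : ∀ x, |f x| ≤ C)
    {v : ℝ → ℝ} (hv : IntegrableOn v (Ioo 0 T)) :
    Continuous (fun t => ∫ s in Ioo (0:ℝ) T, f (t - s) * v s) := by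
  refine continuous_of_dominated (F := fun t s => f (t - s) * v s)
    (bound := fun s => C * |v s|) ?_ ?_ ?_ ?_
  · intro t
    exact ((hfc.comp (continuous_const.sub continuous_id)).aestronglyMeasurable).mul hv.1
  · intro t
    refine Eventually.of_forall fun s => ?_
    rw [Real.norm_eq_abs, abs_mul]
    exact mul_le_mul_of_nonneg_right (hC _) (abs_nonneg _)
  · exact hv.norm.const_mul C |>.congr (Eventually.of_forall fun s => by simp [Real.norm_eq_abs])
  · exact Eventually.of_forall fun s => (hfc.comp (continuous_sub_right s)).mul continuous_const

lemma aux_contraction_meas {T : ℝ} {f : ℝ → ℝ} (hfc : Continuous f)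
    (hfnn : ∀ x, 0 ≤ f x) (hf1 : (∫ x, f x) = 1) (hint : Integrable f volume)
    {v : ℝ → ℝ} (hv : StronglyMeasurable v) :
    eLpNorm (fun t => ∫ s in Ioo (0:ℝ) T, f (t - s) * v s) 2 (volume.restrict (Ioo 0 T)) ≤
      eLpNorm v 2 (volume.restrict (Ioo 0 T)) := by
  set ν := volume.restrict (Ioo (0:ℝ) T) with hν
  have hmf : ∀ t : ℝ, Measurable fun s => ENNReal.ofReal (f (t - s)) := fun t =>
    ENNReal.measurable_ofReal.comp (hfc.measurable.comp (measurable_const.sub measurable_id))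
  have key : ∀ t, (‖∫ s in Ioo (0:ℝ) T, f (t - s) * v s‖₊ : ℝ≥0∞) ^ (2:ℝ) ≤
      ∫⁻ s in Ioo (0:ℝ) T, ENNReal.ofReal (f (t - s)) * (‖v s‖₊ : ℝ≥0∞) ^ (2:ℝ) := by
    intro t
    have hmv : Measurable fun s => (‖v s‖₊ : ℝ≥0∞) := hv.measurable.enorm
    have h1 : (‖∫ s in Ioo (0:ℝ) T, f (t - s) * v s‖₊ : ℝ≥0∞) ≤
        ∫⁻ s, ENNReal.ofReal (f (t - s)) * (‖v s‖₊ : ℝ≥0∞) ∂ν := by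
      refine le_trans (enorm_integral_le_lintegral_enorm _) (le_of_eq ?_)
      refine lintegral_congr fun s => ?_
      rw [enorm_mul, Real.enorm_eq_ofReal (hfnn _), enorm_eq_nnnorm]
    have hCS : (∫⁻ s, ENNReal.ofReal (f (t - s)) * (‖v s‖₊ : ℝ≥0∞) ∂ν) ≤
        (∫⁻ s, ENNReal.ofReal (f (t - s)) ∂ν) ^ (1/2:ℝ) *
        (∫⁻ s, ENNReal.ofReal (f (t - s)) * (‖v s‖₊ : ℝ≥0∞) ^ (2:ℝ) ∂ν) ^ (1/2:ℝ) := by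
      have key := ENNReal.lintegral_mul_le_Lp_mul_Lq ν (p := 2) (q := 2)
        (by constructor <;> norm_num)
        (f := fun s => (ENNReal.ofReal (f (t - s))) ^ (1/2:ℝ))
        (g := fun s => (ENNReal.ofReal (f (t - s))) ^ (1/2:ℝ) * (‖v s‖₊ : ℝ≥0∞))
        ((ENNReal.continuous_rpow_const.measurable.comp (hmf t)).aemeasurable)
        (((ENNReal.continuous_rpow_const.measurable.comp (hmf t)).mul hmv).aemeasurable)
      have hhalf : ∀ x : ℝ≥0∞, x ^ (1/2:ℝ) * x ^ (1/2:ℝ) = x := by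
        intro x
        rw [← sq, ← ENNReal.rpow_natCast (x ^ (1/2:ℝ)) 2, ← ENNReal.rpow_mul]
        norm_num
      calc (∫⁻ s, ENNReal.ofReal (f (t - s)) * (‖v s‖₊ : ℝ≥0∞) ∂ν)
          = ∫⁻ s, ((ENNReal.ofReal (f (t - s))) ^ (1/2:ℝ)) *
              ((ENNReal.ofReal (f (t - s))) ^ (1/2:ℝ) * (‖v s‖₊ : ℝ≥0∞)) ∂ν := by
            refine lintegral_congr fun s => ?_
            rw [← mul_assoc, hhalf]
        _ ≤ _ := key
        _ = _ := by
            congr 1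
            · congr 1
              refine lintegral_congr fun s => ?_
              show ((ENNReal.ofReal (f (t-s))) ^ (1/2:ℝ)) ^ (2:ℝ) = _
              rw [← ENNReal.rpow_mul]; norm_num
            · congr 1
              refine lintegral_congr fun s => ?_
              show ((ENNReal.ofReal (f (t-s))) ^ (1/2:ℝ) * (‖v s‖₊ : ℝ≥0∞)) ^ (2:ℝ) = _
              rw [ENNReal.mul_rpow_of_nonneg _ _ (by norm_num : (0:ℝ) ≤ 2),
                ← ENNReal.rpow_mul]
              norm_num
    have h3 : (∫⁻ s, ENNReal.ofReal (f (t - s)) ∂ν) ≤ 1 := by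
      refine le_trans (setLIntegral_le_lintegral _ _) ?_
      rw [← ofReal_integral_eq_lintegral_ofReal ((integrable_comp_sub_left f t).2 hint)
        (Eventually.of_forall fun s => hfnn _), integral_sub_left_eq_self f volume t, hf1]
      simp
    have h4 : (‖∫ s in Ioo (0:ℝ) T, f (t - s) * v s‖₊ : ℝ≥0∞) ≤
        (∫⁻ s, ENNReal.ofReal (f (t - s)) * (‖v s‖₊ : ℝ≥0∞) ^ (2:ℝ) ∂ν) ^ (1/2:ℝ) := by
      refine le_trans h1 (le_trans hCS ?_)
      calc _ ≤ (1:ℝ≥0∞) ^ (1/2:ℝ) *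
          (∫⁻ s, ENNReal.ofReal (f (t - s)) * (‖v s‖₊ : ℝ≥0∞) ^ (2:ℝ) ∂ν) ^ (1/2:ℝ) :=
            mul_le_mul_left (ENNReal.rpow_le_rpow h3 (by norm_num)) _
        _ = _ := by rw [ENNReal.one_rpow, one_mul]
    calc (‖∫ s in Ioo (0:ℝ) T, f (t - s) * v s‖₊ : ℝ≥0∞) ^ (2:ℝ)
        ≤ ((∫⁻ s, ENNReal.ofReal (f (t - s)) * (‖v s‖₊ : ℝ≥0∞) ^ (2:ℝ) ∂ν) ^ (1/2:ℝ)) ^ (2:ℝ) :=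
          ENNReal.rpow_le_rpow h4 (by norm_num)
      _ = _ := by rw [← ENNReal.rpow_mul]; norm_num; rfl
  have hmt : ∀ s : ℝ, (∫⁻ t, ENNReal.ofReal (f (t - s)) ∂ν) ≤ 1 := by
    intro s
    refine le_trans (setLIntegral_le_lintegral _ _) ?_
    have : Integrable (fun t => f (t - s)) volume := hint.comp_sub_right s
    rw [← ofReal_integral_eq_lintegral_ofReal this (Eventually.of_forall fun t => hfnn _),
      integral_sub_right_eq_self f s, hf1]
    simp
  rw [eLpNorm_eq_lintegral_rpow_enorm_toReal (by norm_num) (by norm_num),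
    eLpNorm_eq_lintegral_rpow_enorm_toReal (by norm_num) (by norm_num)]
  refine ENNReal.rpow_le_rpow ?_ (by norm_num)
  have h2 : ((2:ℝ≥0∞).toReal) = (2:ℝ) := by norm_num
  rw [h2]
  calc (∫⁻ t, (‖∫ s in Ioo (0:ℝ) T, f (t - s) * v s‖₊ : ℝ≥0∞) ^ (2:ℝ) ∂ν)
      ≤ ∫⁻ t, ∫⁻ s, ENNReal.ofReal (f (t - s)) * (‖v s‖₊ : ℝ≥0∞) ^ (2:ℝ) ∂ν ∂ν :=
        lintegral_mono fun t => key t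
    _ = ∫⁻ s, ∫⁻ t, ENNReal.ofReal (f (t - s)) * (‖v s‖₊ : ℝ≥0∞) ^ (2:ℝ) ∂ν ∂ν := by
        refine lintegral_lintegral_swap (Measurable.aemeasurable ?_)
        exact (ENNReal.measurable_ofReal.comp
            (hfc.measurable.comp (measurable_fst.sub measurable_snd))).mul
          ((ENNReal.continuous_rpow_const.measurable.comp
            hv.measurable.enorm).comp measurable_snd)
    _ ≤ ∫⁻ s, (‖v s‖₊ : ℝ≥0∞) ^ (2:ℝ) ∂ν := by
        refine lintegral_mono fun s => ?_
        rw [lintegral_mul_const' _ _ (by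
          exact ENNReal.rpow_ne_top_of_nonneg (by norm_num) ENNReal.coe_ne_top)]
        calc (∫⁻ t, ENNReal.ofReal (f (t - s)) ∂ν) * (‖v s‖₊ : ℝ≥0∞) ^ (2:ℝ)
            ≤ 1 * (‖v s‖₊ : ℝ≥0∞) ^ (2:ℝ) := mul_le_mul_left (hmt s) _
          _ = _ := one_mul _

lemma aux_contraction {T : ℝ} {f : ℝ → ℝ} (hfc : Continuous f)
    (hfnn : ∀ x, 0 ≤ f x) (hf1 : (∫ x, f x) = 1) (hint : Integrable f volume)
    {v : ℝ → ℝ} (hv : AEStronglyMeasurable v (volume.restrict (Ioo 0 T))) :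
    eLpNorm (fun t => ∫ s in Ioo (0:ℝ) T, f (t - s) * v s) 2 (volume.restrict (Ioo 0 T)) ≤
      eLpNorm v 2 (volume.restrict (Ioo 0 T)) := by
  have heq := hv.ae_eq_mk
  have h1 : (fun t => ∫ s in Ioo (0:ℝ) T, f (t - s) * v s)
      = fun t => ∫ s in Ioo (0:ℝ) T, f (t - s) * hv.mk v s := by
    funext t
    exact integral_congr_ae (heq.mono fun s h => by dsimp only; rw [h])
  rw [h1, eLpNorm_congr_ae heq]
  exact aux_contraction_meas hfc hfnn hf1 hint hv.stronglyMeasurable_mk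

lemma aux_L2_of_L1 {T : ℝ} {u : ℝ → ℝ} {C : ℝ}
    (hu : IntegrableOn u (Ioo 0 T))
    (hbd : ∀ᵐ t ∂(volume.restrict (Ioo (0:ℝ) T)), |u t| ≤ C) :
    eLpNorm u 2 (volume.restrict (Ioo 0 T)) ≤
      (ENNReal.ofReal C * ENNReal.ofReal (∫ t in Ioo (0:ℝ) T, |u t|)) ^ (1/2:ℝ) := by
  set ν := volume.restrict (Ioo (0:ℝ) T) with hν
  rw [eLpNorm_eq_lintegral_rpow_enorm_toReal (by norm_num) (by norm_num)]
  have h2 : ((2:ℝ≥0∞).toReal) = (2:ℝ) := by norm_num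
  rw [h2]
  refine ENNReal.rpow_le_rpow ?_ (by norm_num)
  calc (∫⁻ t, (‖u t‖₊ : ℝ≥0∞) ^ (2:ℝ) ∂ν)
      ≤ ∫⁻ t, ENNReal.ofReal C * (‖u t‖₊ : ℝ≥0∞) ∂ν := by
        refine lintegral_mono_ae (hbd.mono fun t ht => ?_)
        have : ((2:ℝ)) = ((2:ℕ):ℝ) := by norm_num
        rw [this, ENNReal.rpow_natCast, sq]
        refine mul_le_mul_left ?_ _
        rw [← enorm_eq_nnnorm, Real.enorm_eq_ofReal_abs]
        exact ENNReal.ofReal_le_ofReal ht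
    _ = ENNReal.ofReal C * ∫⁻ t, (‖u t‖₊ : ℝ≥0∞) ∂ν :=
        lintegral_const_mul' _ _ ENNReal.ofReal_ne_top
    _ = ENNReal.ofReal C * ENNReal.ofReal (∫ t in Ioo (0:ℝ) T, |u t|) := by
        simp only [← enorm_eq_nnnorm]
        rw [← ofReal_integral_norm_eq_lintegral_enorm hu]
        simp [Real.norm_eq_abs]

lemma aux_K_near_g {T e : ℝ} (hT : 0 < T) (he : 0 < e) {f : ℝ → ℝ}
    (hfc : Continuous f) (hfnn : ∀ x, 0 ≤ f x) (hf1 : (∫ x, f x) = 1)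
    (hfsupp : Function.support f ⊆ Icc (-e) e) (hint : Integrable f volume)
    {g : ℝ → ℝ} (hgc : Continuous g)
    {Cg : ℝ} (hCg0 : 0 ≤ Cg) (hCg : ∀ x, |g x| ≤ Cg)
    {ω : ℝ} (hω : 0 ≤ ω) (hmod : ∀ x y : ℝ, |x - y| ≤ e → |g x - g y| ≤ ω) :
    eLpNorm (fun t => (∫ s in Ioo (0:ℝ) T, f (t - s) * g s) - g t) 2
        (volume.restrict (Ioo 0 T)) ≤
      ENNReal.ofReal T ^ (2⁻¹:ℝ) * ENNReal.ofReal ω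
        + ENNReal.ofReal (2*Cg) * ENNReal.ofReal (2*e) ^ (2⁻¹:ℝ) := by
  set ν := volume.restrict (Ioo (0:ℝ) T) with hν
  set bad : Set ℝ := Ioc 0 e ∪ Ico (T-e) T with hbad
  have hbadm : MeasurableSet bad := measurableSet_Ioc.union measurableSet_Ico
  have hint_t : ∀ t : ℝ, Integrable (fun s => f (t - s)) volume := fun t =>
    (integrable_comp_sub_left f t).2 hint
  have h_pt : ∀ᵐ t ∂ν, ‖(∫ s in Ioo (0:ℝ) T, f (t - s) * g s) - g t‖ ≤
      ‖ω + bad.indicator (fun _ => 2*Cg) t‖ := by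
    filter_upwards [ae_restrict_mem measurableSet_Ioo] with t ht
    have hind0 : (0:ℝ) ≤ bad.indicator (fun _ => 2*Cg) t :=
      Set.indicator_nonneg (fun _ _ => by linarith) t
    rw [Real.norm_eq_abs, Real.norm_eq_abs]
    refine le_trans ?_ (le_abs_self _)
    by_cases hgood : e < t ∧ t < T - e
    · -- interior estimate
      have hext : (∫ s in Ioo (0:ℝ) T, f (t - s) * g s) = ∫ s, f (t - s) * g s := by
        refine setIntegral_eq_integral_of_forall_compl_eq_zero fun s hs => ?_
        have : f (t - s) = 0 := by
          by_contra h
          have := hfsupp h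
          simp only [mem_Icc] at this
          exact hs ⟨by linarith [this.2, hgood.1], by linarith [this.1, hgood.2]⟩
        rw [this, zero_mul]
      have hgt : g t = ∫ s, f (t - s) * g t := by
        rw [integral_mul_const, integral_sub_left_eq_self f volume t, hf1, one_mul]
      have hi1 : Integrable (fun s => f (t - s) * g s) volume := by
        have := (hint_t t).bdd_mul hgc.aestronglyMeasurable (c := Cg) (Eventually.of_forall fun s => by
          simpa [Real.norm_eq_abs] using hCg s)
        exact this.congr (Eventually.of_forall fun s => mul_comm _ _)
      have hsub : (∫ s in Ioo (0:ℝ) T, f (t - s) * g s) - g t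
          = ∫ s, f (t - s) * (g s - g t) := by
        rw [hext]
        conv_lhs => rw [hgt]
        rw [← integral_sub hi1 ((hint_t t).mul_const (g t))]
        congr 1; funext s; ring
      rw [hsub]
      have hb : |∫ s, f (t - s) * (g s - g t)| ≤ ∫ s, ω * f (t - s) := by
        rw [← Real.norm_eq_abs]
        refine norm_integral_le_of_norm_le ((hint_t t).const_mul ω)
          (Eventually.of_forall fun s => ?_)
        rw [Real.norm_eq_abs, abs_mul, abs_of_nonneg (hfnn _)]
        by_cases hz : f (t - s) = 0
        · simp [hz]
        · have hse : |s - t| ≤ e := by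
            have := hfsupp hz
            simp only [mem_Icc] at this
            rw [abs_le]; constructor <;> linarith [this.1, this.2]
          calc f (t-s) * |g s - g t| ≤ f (t-s) * ω :=
                mul_le_mul_of_nonneg_left (hmod s t hse) (hfnn _)
            _ = ω * f (t-s) := mul_comm _ _
      have : (∫ s, ω * f (t - s)) = ω := by
        rw [integral_const_mul, integral_sub_left_eq_self f volume t, hf1, mul_one]
      calc |∫ s, f (t - s) * (g s - g t)| ≤ ω := by rw [← this]; exact hb
        _ ≤ ω + bad.indicator (fun _ => 2*Cg) t := by linarith
    · -- boundary estimate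
      have htbad : t ∈ bad := by
        rcases not_and_or.mp hgood with h | h
        · exact Or.inl ⟨ht.1, not_lt.mp h⟩
        · exact Or.inr ⟨by linarith [not_lt.mp h], ht.2⟩
      have hK : |∫ s in Ioo (0:ℝ) T, f (t - s) * g s| ≤ Cg := by
        rw [← Real.norm_eq_abs]
        refine le_trans (norm_integral_le_of_norm_le
          (((hint_t t).const_mul Cg).integrableOn)
          (Eventually.of_forall fun s => ?_)) ?_
        · rw [Real.norm_eq_abs, abs_mul, abs_of_nonneg (hfnn _), mul_comm]
          exact mul_le_mul_of_nonneg_right (hCg s) (hfnn _)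
        · have h1 : (∫ s in Ioo (0:ℝ) T, Cg * f (t - s)) = Cg * ∫ s in Ioo (0:ℝ) T, f (t-s) := by
            rw [integral_const_mul]
          rw [h1]
          have h2 : (∫ s in Ioo (0:ℝ) T, f (t-s)) ≤ 1 := by
            calc (∫ s in Ioo (0:ℝ) T, f (t-s)) ≤ ∫ s, f (t-s) :=
                setIntegral_le_integral (hint_t t) (Eventually.of_forall fun s => hfnn _)
              _ = 1 := by rw [integral_sub_left_eq_self f volume t, hf1]
          have h3 : (0:ℝ) ≤ ∫ s in Ioo (0:ℝ) T, f (t-s) :=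
            integral_nonneg fun s => hfnn _
          nlinarith
      have : bad.indicator (fun _ => 2*Cg) t = 2*Cg := Set.indicator_of_mem htbad _
      rw [this]
      calc |(∫ s in Ioo (0:ℝ) T, f (t - s) * g s) - g t|
          ≤ |∫ s in Ioo (0:ℝ) T, f (t - s) * g s| + |g t| := abs_sub _ _
        _ ≤ Cg + Cg := add_le_add hK (hCg t)
        _ ≤ ω + 2*Cg := by linarith
  calc eLpNorm (fun t => (∫ s in Ioo (0:ℝ) T, f (t - s) * g s) - g t) 2 ν
      ≤ eLpNorm (fun t => ω + bad.indicator (fun _ => 2*Cg) t) 2 ν := eLpNorm_mono_ae h_pt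
    _ ≤ eLpNorm (fun _ : ℝ => ω) 2 ν + eLpNorm (bad.indicator (fun _ => 2*Cg)) 2 ν :=
        eLpNorm_add_le aestronglyMeasurable_const
          ((stronglyMeasurable_const.indicator hbadm).aestronglyMeasurable) one_le_two
    _ ≤ ENNReal.ofReal T ^ (2⁻¹:ℝ) * ENNReal.ofReal ω
        + ENNReal.ofReal (2*Cg) * ENNReal.ofReal (2*e) ^ (2⁻¹:ℝ) := by
        refine add_le_add ?_ ?_
        · have hb := eLpNorm_le_of_ae_bound (μ := ν) (p := 2) (f := fun _ : ℝ => ω) (C := ω)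
            (Eventually.of_forall fun t => le_of_eq (Real.norm_of_nonneg hω))
          have huniv : ν Set.univ = ENNReal.ofReal T := by
            rw [hν, Measure.restrict_apply_univ, Real.volume_Ioo, sub_zero]
          rw [huniv] at hb
          refine hb.trans (le_of_eq ?_)
          norm_num
        · rw [eLpNorm_indicator_const hbadm (by norm_num) (by norm_num)]
          refine mul_le_mul ?_ ?_ zero_le zero_le
          · rw [← Real.enorm_eq_ofReal (by linarith : (0:ℝ) ≤ 2*Cg)]
          · have hb : ν bad ≤ ENNReal.ofReal (2*e) := by
              rw [hν, Measure.restrict_apply hbadm]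
              refine le_trans (measure_mono (inter_subset_left)) ?_
              refine le_trans (measure_union_le _ _) ?_
              rw [Real.volume_Ioc, Real.volume_Ico, sub_zero, sub_sub_cancel]
              rw [← ENNReal.ofReal_add he.le he.le]
              exact le_of_eq (by ring_nf)
            calc ν bad ^ (1/(2:ℝ≥0∞).toReal) = ν bad ^ (2⁻¹:ℝ) := by norm_num
              _ ≤ ENNReal.ofReal (2*e) ^ (2⁻¹:ℝ) := ENNReal.rpow_le_rpow hb (by norm_num)

lemma aux_moll_conv {T : ℝ} (hT : 0 < T)
    (η : ℝ → ℝ → ℝ)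
    (hη : ∀ e : ℝ, 0 < e → Continuous (η e) ∧ (∀ x, 0 ≤ η e x) ∧
      (∫ x, η e x) = 1 ∧ Function.support (η e) ⊆ Icc (-e) e)
    (ε : ℕ → ℝ) (hεpos : ∀ n, 0 < ε n) (hε0 : Tendsto ε atTop (nhds 0))
    {w : ℝ → ℝ} (hw : IntegrableOn w (Ioo 0 T))
    (hmem : MemLp ((Ioo (0:ℝ) T).indicator w) 2 volume) :
    Tendsto (fun n => eLpNorm (fun t => (∫ s in Ioo (0:ℝ) T, η (ε n) (t - s) * w s) - w t)
      2 (volume.restrict (Ioo 0 T))) atTop (nhds 0) := by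
  set ν := volume.restrict (Ioo (0:ℝ) T) with hν
  rw [ENNReal.tendsto_nhds_zero]
  intro δ hδ
  set δ' := min δ 1 with hδ'def
  have hδ'0 : 0 < δ' := lt_min hδ zero_lt_one
  have hδ'top : δ' ≠ ⊤ := ne_top_of_le_ne_top ENNReal.one_ne_top (min_le_right _ _)
  have hq : δ'/4 ≠ 0 := by
    simp only [ne_eq, ENNReal.div_eq_zero_iff, not_or]
    exact ⟨hδ'0.ne', by norm_num⟩
  have hδ4top : δ'/4 ≠ ⊤ := by
    exact (ENNReal.div_lt_top hδ'top (by norm_num)).ne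
  obtain ⟨g, g_supp, hg_close, g_cont, _⟩ :=
    hmem.exists_hasCompactSupport_eLpNorm_sub_le (by norm_num : (2:ℝ≥0∞) ≠ ⊤) hq
  obtain ⟨Cg, hCg0, hCg⟩ := aux_bdd g g_cont g_supp
  set ω := (δ'/4).toReal / (Real.sqrt T + 1) with hωdef
  have hsq : 0 < Real.sqrt T + 1 := by positivity
  have hω0 : 0 < ω := div_pos (ENNReal.toReal_pos hq hδ4top) hsq
  obtain ⟨ζ, hζ0, hζ⟩ := Metric.uniformContinuous_iff.mp
    (g_supp.uniformContinuous_of_continuous g_cont) ω hω0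
  have hterm2a : ENNReal.ofReal T ^ (2⁻¹:ℝ) * ENNReal.ofReal ω ≤ δ'/4 := by
    rw [ENNReal.ofReal_rpow_of_pos hT, ← ENNReal.ofReal_mul (Real.rpow_nonneg hT.le _)]
    have h1 : T ^ (2⁻¹:ℝ) * ω ≤ (δ'/4).toReal := by
      have hX : 0 ≤ (δ'/4).toReal := ENNReal.toReal_nonneg
      have hsqrt : T ^ (2⁻¹:ℝ) = Real.sqrt T := by
        rw [Real.sqrt_eq_rpow]; norm_num
      rw [hsqrt, hωdef, mul_comm, div_mul_eq_mul_div, div_le_iff₀ hsq]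
      nlinarith [Real.sqrt_nonneg T]
    calc ENNReal.ofReal (T ^ (2⁻¹:ℝ) * ω) ≤ ENNReal.ofReal ((δ'/4).toReal) :=
          ENNReal.ofReal_le_ofReal h1
      _ = δ'/4 := ENNReal.ofReal_toReal hδ4top
  have ht2 : Tendsto (fun n => ENNReal.ofReal (2*Cg) * ENNReal.ofReal (2*ε n) ^ (2⁻¹:ℝ))
      atTop (nhds 0) := by
    have h1 : Tendsto (fun n => (2:ℝ)*ε n) atTop (nhds 0) := by
      simpa using hε0.const_mul 2
    have h2 : Tendsto (fun n => ENNReal.ofReal (2*ε n)) atTop (nhds 0) := by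
      simpa using ENNReal.tendsto_ofReal h1
    have h3 : Tendsto (fun n => ENNReal.ofReal (2*ε n) ^ (2⁻¹:ℝ)) atTop (nhds 0) := by
      have hc := (ENNReal.continuous_rpow_const (y := (2⁻¹:ℝ))).tendsto 0
      have := hc.comp h2
      simpa [Function.comp_def, ENNReal.zero_rpow_of_pos (by norm_num : (0:ℝ) < 2⁻¹)] using this
    have h4 := ENNReal.Tendsto.const_mul (a := ENNReal.ofReal (2*Cg)) h3
      (Or.inr (ENNReal.ofReal_ne_top (r := 2*Cg)))
    simpa using h4
  have hδ4pos : (0:ℝ≥0∞) < δ'/4 := ENNReal.div_pos hδ'0.ne' (by norm_num)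
  have hev2 := (ENNReal.tendsto_nhds_zero.mp ht2) (δ'/4) hδ4pos
  have hevζ : ∀ᶠ n in atTop, ε n < ζ := hε0.eventually (eventually_lt_nhds hζ0)
  filter_upwards [hev2, hevζ] with n h2 hzn
  obtain ⟨hcont, hnn, hone, hsupp⟩ := hη (ε n) (hεpos n)
  have hintf : Integrable (η (ε n)) volume :=
    hcont.integrable_of_hasCompactSupport (aux_hcs hsupp)
  obtain ⟨Cf, hCf0, hCf⟩ := aux_bdd (η (ε n)) hcont (aux_hcs hsupp)
  have hgInt : IntegrableOn g (Ioo 0 T) :=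
    (g_cont.integrable_of_hasCompactSupport g_supp).integrableOn
  have hmod : ∀ x y : ℝ, |x - y| ≤ ε n → |g x - g y| ≤ ω := fun x y hxy => by
    have := hζ (a := x) (b := y) (by rw [Real.dist_eq]; exact lt_of_le_of_lt hxy hzn)
    rw [Real.dist_eq] at this; exact this.le
  have hsplit : (fun t => (∫ s in Ioo (0:ℝ) T, η (ε n) (t - s) * w s) - w t)
      = fun t => (∫ s in Ioo (0:ℝ) T, η (ε n) (t - s) * (w s - g s))
          + (((∫ s in Ioo (0:ℝ) T, η (ε n) (t - s) * g s) - g t) + (g t - w t)) := by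
    funext t
    have hIw := aux_K_integrableOn hcont Cf hCf hw t
    have hIg := aux_K_integrableOn hcont Cf hCf hgInt t
    have hd : (∫ s in Ioo (0:ℝ) T, η (ε n) (t - s) * (w s - g s))
        = (∫ s in Ioo (0:ℝ) T, η (ε n) (t-s) * w s)
          - ∫ s in Ioo (0:ℝ) T, η (ε n) (t-s) * g s := by
      rw [← integral_sub hIw hIg]
      refine integral_congr_ae (Eventually.of_forall fun s => ?_)
      dsimp only; ring
    rw [hd]; ring
  rw [hsplit]
  have hA1 : AEStronglyMeasurable
      (fun t => ∫ s in Ioo (0:ℝ) T, η (ε n) (t - s) * (w s - g s)) ν :=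
    (aux_K_cont hcont Cf hCf (hw.sub hgInt)).aestronglyMeasurable
  have hA2 : AEStronglyMeasurable
      (fun t => ((∫ s in Ioo (0:ℝ) T, η (ε n) (t - s) * g s) - g t)) ν :=
    ((aux_K_cont hcont Cf hCf hgInt).sub g_cont).aestronglyMeasurable
  have hA3 : AEStronglyMeasurable (fun t => g t - w t) ν :=
    g_cont.aestronglyMeasurable.sub hw.1
  have htri : eLpNorm (fun t => (∫ s in Ioo (0:ℝ) T, η (ε n) (t - s) * (w s - g s))
          + (((∫ s in Ioo (0:ℝ) T, η (ε n) (t - s) * g s) - g t) + (g t - w t))) 2 ν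
      ≤ eLpNorm (fun t => ∫ s in Ioo (0:ℝ) T, η (ε n) (t - s) * (w s - g s)) 2 ν
        + (eLpNorm (fun t => (∫ s in Ioo (0:ℝ) T, η (ε n) (t - s) * g s) - g t) 2 ν
          + eLpNorm (fun t => g t - w t) 2 ν) := by
    refine le_trans (eLpNorm_add_le hA1 (hA2.add hA3) one_le_two) ?_
    exact add_le_add_right (eLpNorm_add_le hA2 hA3 one_le_two) _
  refine le_trans htri ?_
  -- term 1
  have hwg_close : eLpNorm (fun s => w s - g s) 2 ν ≤ δ'/4 := by
    have he1 : eLpNorm (fun s => w s - g s) 2 ν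
        = eLpNorm (fun s => (Ioo (0:ℝ) T).indicator w s - g s) 2 ν := by
      refine eLpNorm_congr_ae ((ae_restrict_mem measurableSet_Ioo).mono fun s hs => ?_)
      dsimp only; rw [Set.indicator_of_mem hs]
    rw [he1]
    refine le_trans (eLpNorm_mono_measure _ Measure.restrict_le_self) ?_
    exact le_trans (le_of_eq (by rfl)) hg_close
  have ht1 : eLpNorm (fun t => ∫ s in Ioo (0:ℝ) T, η (ε n) (t - s) * (w s - g s)) 2 ν
      ≤ δ'/4 :=
    le_trans (aux_contraction hcont hnn hone hintf (hw.1.sub g_cont.aestronglyMeasurable))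
      hwg_close
  -- term 3
  have ht3 : eLpNorm (fun t => g t - w t) 2 ν ≤ δ'/4 := by
    refine le_trans (eLpNorm_mono fun t => ?_) hwg_close
    rw [norm_sub_rev]
  -- term 2
  have ht2' : eLpNorm (fun t => (∫ s in Ioo (0:ℝ) T, η (ε n) (t - s) * g s) - g t) 2 ν
      ≤ δ'/4 + δ'/4 := by
    refine le_trans (aux_K_near_g hT (hεpos n) hcont hnn hone hsupp hintf g_cont
      hCg0 hCg hω0.le hmod) ?_
    exact add_le_add hterm2a h2
  calc _ ≤ δ'/4 + ((δ'/4 + δ'/4) + δ'/4) := add_le_add ht1 (add_le_add ht2' ht3)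
    _ = δ' := by
        rw [ENNReal.div_add_div_same, ENNReal.div_add_div_same, ENNReal.div_add_div_same]
        have : δ' + (δ' + δ' + δ') = 4 * δ' := by ring
        rw [this, mul_div_assoc]
        exact ENNReal.mul_div_cancel' (by norm_num) (by norm_num)
    _ ≤ δ := min_le_left _ _

lemma aux_TV_zero_mem (T : ℝ) (f : ℝ → ℝ) : (0:ℝ) ∈ TVset T f := by
  refine ⟨fun _ => 0, contDiff_const, ?_, ?_, fun s => by simp, ?_⟩
  · have : (fun _ : ℝ => (0:ℝ)) = 0 := rfl
    rw [this]
    exact HasCompactSupport.zero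
  · simp [Function.support]
  · simp [deriv_const']

lemma aux_TV_nonneg {T : ℝ} {f : ℝ → ℝ} (hb : BddAbove (TVset T f)) : 0 ≤ TV T f :=
  le_csSup hb (aux_TV_zero_mem T f)

lemma aux_mul_deriv_int {T : ℝ} {v : ℝ → ℝ} (hv : IntegrableOn v (Ioo 0 T))
    {φ : ℝ → ℝ} (hφ1 : ContDiff ℝ 1 φ) (hφc : HasCompactSupport φ)
    {C : ℝ} (hC : ∀ x, |deriv φ x| ≤ C) :
    IntegrableOn (fun t => v t * deriv φ t) (Ioo 0 T) := by
  have := hv.bdd_mul ((hφ1.continuous_deriv le_rfl).aestronglyMeasurable) (c := C) (Eventually.of_forall fun x => by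
    simpa [Real.norm_eq_abs] using hC x)
  exact this.congr (Eventually.of_forall fun t => mul_comm _ _)

lemma aux_testval {T : ℝ} {w : ℝ → ℝ} (hw : IntegrableOn w (Ioo 0 T))
    {wseq : ℕ → ℝ → ℝ} (hws : ∀ n, IntegrableOn (wseq n) (Ioo 0 T))
    (hL1 : Tendsto (fun n => ∫ t in Ioo (0:ℝ) T, |wseq n t - w t|) atTop (nhds 0))
    {φ : ℝ → ℝ} (hφ1 : ContDiff ℝ 1 φ) (hφc : HasCompactSupport φ) :
    Tendsto (fun n => ∫ t in Ioo (0:ℝ) T, wseq n t * deriv φ t) atTop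
      (nhds (∫ t in Ioo (0:ℝ) T, w t * deriv φ t)) := by
  obtain ⟨C, hC0, hC⟩ := aux_bdd (deriv φ) (hφ1.continuous_deriv le_rfl) hφc.deriv
  rw [tendsto_iff_dist_tendsto_zero]
  have key : ∀ n, dist (∫ t in Ioo (0:ℝ) T, wseq n t * deriv φ t)
      (∫ t in Ioo (0:ℝ) T, w t * deriv φ t) ≤ (∫ t in Ioo (0:ℝ) T, |wseq n t - w t|) * C := by
    intro n
    rw [Real.dist_eq, ← integral_sub (aux_mul_deriv_int (hws n) hφ1 hφc hC)
      (aux_mul_deriv_int hw hφ1 hφc hC), ← Real.norm_eq_abs]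
    have hbint : IntegrableOn (fun t => |wseq n t - w t| * C) (Ioo 0 T) :=
      ((hws n).sub hw).abs.mul_const C
    refine le_trans (norm_integral_le_of_norm_le hbint (Eventually.of_forall fun t => ?_)) ?_
    · rw [Real.norm_eq_abs]
      have : wseq n t * deriv φ t - w t * deriv φ t = (wseq n t - w t) * deriv φ t := by ring
      rw [this, abs_mul]
      exact mul_le_mul_of_nonneg_left (hC t) (abs_nonneg _)
    · rw [integral_mul_const]
  refine squeeze_zero (fun n => dist_nonneg) key ?_
  simpa using hL1.mul_const C

/-- Γ-convergence: with `ĵ_{εⁿ}(w) = j(K_{εⁿ} w) + α TV(w)` and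
`ĵ(w) = j(w) + α TV(w)`, where `j : L²(0,T) → ℝ` is continuous (phrased as
sequential continuity w.r.t. `L²(0,T)` convergence) and `K_ε` is mollification
by a family of positive mollifiers, the functionals `ĵ_{εⁿ}` Γ-converge to `ĵ`
on `BV_W(0,T)` w.r.t. weak-* convergence: (i) lower bound inequality along any
weakly-* convergent sequence; (ii) the constant sequence is a recovery sequence
(which also converges strictly, giving Γ-convergence w.r.t. strict convergence). -/
theorem stmt5 (T α : ℝ) (hT : 0 < T) (hα : 0 < α) (W : Finset ℤ)
    (j : (ℝ → ℝ) → ℝ)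
    (hj_cont : ∀ (u : ℕ → ℝ → ℝ) (v : ℝ → ℝ),
      Tendsto (fun n => eLpNorm (fun t => u n t - v t) 2
        (volume.restrict (Ioo (0:ℝ) T))) atTop (nhds 0) →
      Tendsto (fun n => j (u n)) atTop (nhds (j v)))
    (η : ℝ → ℝ → ℝ)
    (hη : ∀ e : ℝ, 0 < e → ContDiff ℝ (⊤ : ℕ∞) (η e) ∧ (∀ x, 0 ≤ η e x) ∧
      (∫ x, η e x) = 1 ∧ Function.support (η e) ⊆ Icc (-e) e)
    (ε : ℕ → ℝ) (hεpos : ∀ n, 0 < ε n) (hε0 : Tendsto ε atTop (nhds 0)) :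
    -- (i) lower bound inequality:
    (∀ w : ℝ → ℝ, memBVW T W w →
      ∀ wseq : ℕ → ℝ → ℝ, (∀ n, memBVW T W (wseq n)) →
        Tendsto (fun n => ∫ t in Ioo (0:ℝ) T, |wseq n t - w t|) atTop (nhds 0) →
        IsBoundedUnder (· ≤ ·) atTop (fun n => TV T (wseq n)) →
        j w + α * TV T w ≤
          liminf (fun n =>
            j (fun t => ∫ s in Ioo (0:ℝ) T, η (ε n) (t - s) * wseq n s)
              + α * TV T (wseq n)) atTop) ∧
    -- (ii) the constant sequence `wⁿ := w` is a recovery sequence: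
    (∀ w : ℝ → ℝ, memBVW T W w →
      Tendsto (fun n =>
          j (fun t => ∫ s in Ioo (0:ℝ) T, η (ε n) (t - s) * w s) + α * TV T w)
        atTop (nhds (j w + α * TV T w))) := by
  classical
  set M : ℝ := ((W.sup fun k => k.natAbs : ℕ) : ℝ) with hMdef
  set ν := volume.restrict (Ioo (0:ℝ) T) with hνdef
  have hη' : ∀ e : ℝ, 0 < e → Continuous (η e) ∧ (∀ x, 0 ≤ η e x) ∧
      (∫ x, η e x) = 1 ∧ Function.support (η e) ⊆ Icc (-e) e := fun e he =>
    ⟨(hη e he).1.continuous, (hη e he).2.1, (hη e he).2.2.1, (hη e he).2.2.2⟩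
  have hM : ∀ v : ℝ → ℝ, memBVW T W v → ∀ᵐ t ∂ν, |v t| ≤ M := by
    intro v hv
    refine hv.2.2.mono fun t ht => ?_
    obtain ⟨k, hk, hkt⟩ := ht
    rw [hkt]
    have h1 : |(k:ℝ)| = ((k.natAbs : ℕ) : ℝ) := by
      push_cast [Nat.cast_natAbs]
      ring
    rw [h1, hMdef]
    exact Nat.cast_le.mpr (Finset.le_sup hk)
  have hMemLp : ∀ v : ℝ → ℝ, memBVW T W v → MemLp ((Ioo (0:ℝ) T).indicator v) 2 volume := by
    intro v hv
    constructor
    · exact (aestronglyMeasurable_indicator_iff measurableSet_Ioo).2 hv.1.aestronglyMeasurable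
    · rw [eLpNorm_indicator_eq_eLpNorm_restrict measurableSet_Ioo]
      refine lt_of_le_of_lt (eLpNorm_le_of_ae_bound (C := M)
        ((hM v hv).mono fun t ht => by rwa [Real.norm_eq_abs])) ?_
      have huniv : (volume.restrict (Ioo (0:ℝ) T)) Set.univ = ENNReal.ofReal T := by
        rw [Measure.restrict_apply_univ, Real.volume_Ioo, sub_zero]
      rw [huniv]
      exact ENNReal.mul_lt_top
        (ENNReal.rpow_lt_top_of_nonneg (by norm_num) ENNReal.ofReal_ne_top)
        ENNReal.ofReal_lt_top
  constructor
  · -- Part (i): lower bound inequality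
    intro w hw wseq hws hL1 hTVb
    -- L¹ → L² for the differences
    have hL2diff : Tendsto (fun n => eLpNorm (fun t => wseq n t - w t) 2 ν) atTop (nhds 0) := by
      have hub : ∀ n, eLpNorm (fun t => wseq n t - w t) 2 ν ≤
          (ENNReal.ofReal (M+M) *
            ENNReal.ofReal (∫ t in Ioo (0:ℝ) T, |wseq n t - w t|)) ^ (1/2:ℝ) := by
        intro n
        refine aux_L2_of_L1 ((hws n).1.sub hw.1) ?_
        refine ((hM _ (hws n)).and (hM _ hw)).mono fun t ht => ?_
        calc |wseq n t - w t| ≤ |wseq n t| + |w t| := abs_sub _ _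
          _ ≤ M + M := add_le_add ht.1 ht.2
      have hrhs : Tendsto (fun n => (ENNReal.ofReal (M+M) *
          ENNReal.ofReal (∫ t in Ioo (0:ℝ) T, |wseq n t - w t|)) ^ (1/2:ℝ))
          atTop (nhds 0) := by
        have h1 : Tendsto (fun n => ENNReal.ofReal (∫ t in Ioo (0:ℝ) T, |wseq n t - w t|))
            atTop (nhds 0) := by
          simpa using ENNReal.tendsto_ofReal hL1
        have h2 := ENNReal.Tendsto.const_mul (a := ENNReal.ofReal (M+M)) h1
          (Or.inr (ENNReal.ofReal_ne_top (r := M+M)))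
        rw [mul_zero] at h2
        have h3 := ((ENNReal.continuous_rpow_const (y := (1/2:ℝ))).tendsto 0).comp h2
        simpa [Function.comp_def, ENNReal.zero_rpow_of_pos (by norm_num : (0:ℝ) < 1/2)] using h3
      exact tendsto_of_tendsto_of_tendsto_of_le_of_le tendsto_const_nhds hrhs
        (fun n => zero_le) hub
    have hKw := aux_moll_conv hT η hη' ε hεpos hε0 hw.1 (hMemLp w hw)
    have hKn : Tendsto (fun n => eLpNorm
        (fun t => (∫ s in Ioo (0:ℝ) T, η (ε n) (t - s) * wseq n s) - w t) 2 ν)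
        atTop (nhds 0) := by
      have hub : ∀ n, eLpNorm
          (fun t => (∫ s in Ioo (0:ℝ) T, η (ε n) (t - s) * wseq n s) - w t) 2 ν ≤
          eLpNorm (fun t => wseq n t - w t) 2 ν +
          eLpNorm (fun t => (∫ s in Ioo (0:ℝ) T, η (ε n) (t - s) * w s) - w t) 2 ν := by
        intro n
        obtain ⟨hcont, hnn, hone, hsupp⟩ := hη' (ε n) (hεpos n)
        obtain ⟨Cf, hCf0, hCf⟩ := aux_bdd (η (ε n)) hcont (aux_hcs hsupp)
        have hintf : Integrable (η (ε n)) volume := hcont.integrable_of_hasCompactSupport (aux_hcs hsupp)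
        have hsplit : (fun t => (∫ s in Ioo (0:ℝ) T, η (ε n) (t - s) * wseq n s) - w t)
            = fun t => (∫ s in Ioo (0:ℝ) T, η (ε n) (t - s) * (wseq n s - w s))
                + ((∫ s in Ioo (0:ℝ) T, η (ε n) (t - s) * w s) - w t) := by
          funext t
          have hd : (∫ s in Ioo (0:ℝ) T, η (ε n) (t - s) * (wseq n s - w s))
              = (∫ s in Ioo (0:ℝ) T, η (ε n) (t - s) * wseq n s)
                - ∫ s in Ioo (0:ℝ) T, η (ε n) (t - s) * w s := by
            rw [← integral_sub (aux_K_integrableOn hcont Cf hCf (hws n).1 t)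
              (aux_K_integrableOn hcont Cf hCf hw.1 t)]
            refine integral_congr_ae (Eventually.of_forall fun s => ?_)
            dsimp only; ring
          rw [hd]; ring
        rw [hsplit]
        refine le_trans (eLpNorm_add_le
          ((aux_K_cont hcont Cf hCf ((hws n).1.sub hw.1)).aestronglyMeasurable)
          (((aux_K_cont hcont Cf hCf hw.1).aestronglyMeasurable).sub hw.1.1)
          one_le_two) ?_
        exact add_le_add
          (aux_contraction hcont hnn hone hintf ((hws n).1.1.sub hw.1.1)) le_rfl
      have hsum : Tendsto (fun n => eLpNorm (fun t => wseq n t - w t) 2 ν +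
          eLpNorm (fun t => (∫ s in Ioo (0:ℝ) T, η (ε n) (t - s) * w s) - w t) 2 ν)
          atTop (nhds 0) := by
        simpa using Tendsto.add hL2diff hKw
      exact tendsto_of_tendsto_of_tendsto_of_le_of_le tendsto_const_nhds hsum
        (fun n => zero_le) hub
    have h_j : Tendsto (fun n =>
        j (fun t => ∫ s in Ioo (0:ℝ) T, η (ε n) (t - s) * wseq n s)) atTop (nhds (j w)) :=
      hj_cont (fun n => fun t => ∫ s in Ioo (0:ℝ) T, η (ε n) (t - s) * wseq n s) w hKn
    obtain ⟨c1, hc1⟩ := h_j.isBoundedUnder_le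
    obtain ⟨c2, hc2⟩ := hTVb
    have hc1' : ∀ᶠ n in atTop,
        j (fun t => ∫ s in Ioo (0:ℝ) T, η (ε n) (t - s) * wseq n s) ≤ c1 :=
      eventually_map.mp hc1
    have hc2' : ∀ᶠ n in atTop, TV T (wseq n) ≤ c2 := eventually_map.mp hc2
    have hLbdd : IsBoundedUnder (· ≤ ·) atTop (fun n =>
        j (fun t => ∫ s in Ioo (0:ℝ) T, η (ε n) (t - s) * wseq n s)
          + α * TV T (wseq n)) := by
      refine ⟨c1 + α * c2, eventually_map.mpr ?_⟩
      filter_upwards [hc1', hc2'] with n h1 h2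
      exact add_le_add h1 (mul_le_mul_of_nonneg_left h2 hα.le)
    by_contra hcon
    push_neg at hcon
    set L := liminf (fun n =>
      j (fun t => ∫ s in Ioo (0:ℝ) T, η (ε n) (t - s) * wseq n s)
        + α * TV T (wseq n)) atTop with hLdef
    set δ := (j w + α * TV T w - L) / 2 with hδdef
    have hδpos : 0 < δ := by
      rw [hδdef]; linarith
    have claim : ∀ a ∈ TVset T w, (j w - δ) + α * a ≤ L := by
      intro a ha
      obtain ⟨φ, hφ1, hφc, hφsupp, hφb, hae⟩ := ha
      have haconv := aux_testval hw.1 (fun n => (hws n).1) hL1 hφ1 hφc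
      have h1 : ∀ n, (∫ t in Ioo (0:ℝ) T, wseq n t * deriv φ t) ≤ TV T (wseq n) := fun n =>
        le_csSup (hws n).2.1 ⟨φ, hφ1, hφc, hφsupp, hφb, rfl⟩
      have hev : ∀ᶠ n in atTop, j w - δ ≤
          j (fun t => ∫ s in Ioo (0:ℝ) T, η (ε n) (t - s) * wseq n s) :=
        h_j.eventually (eventually_ge_nhds (by linarith))
      have h3 : Tendsto (fun n =>
          (j w - δ) + α * (∫ t in Ioo (0:ℝ) T, wseq n t * deriv φ t)) atTop
          (nhds ((j w - δ) + α * (∫ t in Ioo (0:ℝ) T, w t * deriv φ t))) :=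
        (haconv.const_mul α).const_add _
      have h4 : ∀ᶠ n in atTop,
          (j w - δ) + α * (∫ t in Ioo (0:ℝ) T, wseq n t * deriv φ t) ≤
          j (fun t => ∫ s in Ioo (0:ℝ) T, η (ε n) (t - s) * wseq n s)
            + α * TV T (wseq n) :=
        hev.mono fun n hn => add_le_add hn (mul_le_mul_of_nonneg_left (h1 n) hα.le)
      have h5 := liminf_le_liminf h4 h3.isBoundedUnder_ge hLbdd.isCoboundedUnder_ge
      rw [h3.liminf_eq] at h5
      rw [hae]
      exact h5
    have hTVle : TV T w ≤ (L - j w + δ) / α := by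
      refine csSup_le ⟨0, aux_TV_zero_mem T w⟩ fun a ha => ?_
      have h := claim a ha
      rw [le_div_iff₀ hα]
      linarith
    have h6 : α * TV T w ≤ L - j w + δ := by
      calc α * TV T w = TV T w * α := mul_comm _ _
        _ ≤ ((L - j w + δ) / α) * α := mul_le_mul_of_nonneg_right hTVle hα.le
        _ = L - j w + δ := div_mul_cancel₀ _ hα.ne'
    rw [hδdef] at h6
    linarith
  · -- Part (ii): recovery sequence
    intro w hw
    have hconv := aux_moll_conv hT η hη' ε hεpos hε0 hw.1 (hMemLp w hw)
    have hj := hj_cont (fun n => fun t => ∫ s in Ioo (0:ℝ) T, η (ε n) (t - s) * w s) w hconv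
    exact hj.add_const _
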